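/- Let α, β, k be real numbers with α > 0, β > −1 and 0 < k < β + 1. Then, entrywise, ∫₀¹ x^{−1} W(x) dx = μ₋₁, where W is the 2×2 matrix-valued weight of the context and μ₋₁ = (Γ(α)Γ(β+2)/Γ(α+β+2)) · [[α+β−k+1, −1], [−1, ((α+1)(k+1)(α+β−k+2) − k(β−k+1))/((α+β+2)(β−k+1))]]. -/

import Mathlib

open Matrix

noncomputable def Vmat (α β k : ℝ) : Matrix (Fin 2) (Fin 2) ℝ :=
  !![1, 1; 0, -(α + β - k + 2) / (β - k + 1)]

noncomputable def Zmat (β k : ℝ) (x : ℝ) : Matrix (Fin 2) (Fin 2) ℝ :=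
  !![k * x + β - k + 1, (β - k + 1) * (1 - x);
     (β - k + 1) * (1 - x), (β - k + 1) * (1 - x) ^ 2]

/-- The weight matrix `W(x) = x^α (1-x)^β Vᵀ Z(x) V` of the `d = 2`
Jacobi-type example. -/
noncomputable def Wmat (α β k : ℝ) (x : ℝ) : Matrix (Fin 2) (Fin 2) ℝ :=
  (x ^ α * (1 - x) ^ β) • ((Vmat α β k)ᵀ * Zmat β k x * Vmat α β k)

/-- The zeroth moment `μ₀` of the weight `W` of the `d = 2` Jacobi-type
example. -/
noncomputable def mu0 (α β k : ℝ) : Matrix (Fin 2) (Fin 2) ℝ :=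
  (Real.Gamma (α + 1) * Real.Gamma (β + 2) * (α + β - k + 2) /
      Real.Gamma (α + β + 3)) •
    !![1, 0; 0, (α + 1) * (k + 1) / ((α + β + 3) * (β - k + 1))]

/-- The `(-1)`-st moment `μ₋₁` of the weight `W` of the `d = 2` Jacobi-type
example. -/
noncomputable def muM1 (α β k : ℝ) : Matrix (Fin 2) (Fin 2) ℝ :=
  (Real.Gamma α * Real.Gamma (β + 2) / Real.Gamma (α + β + 2)) •
    !![α + β - k + 1, -1;
       -1, ((α + 1) * (k + 1) * (α + β - k + 2) - k * (β - k + 1)) /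
         ((α + β + 2) * (β - k + 1))]

/-!
Since `x⁻¹ x^α = x^(α-1)`, every entry of `x⁻¹ W(x)` is `x^(α-1) (1-x)^β` times a quadratic
polynomial in `1 - x`. The monomial `(1-x)^n` integrates against this weight to the Beta value
`B(α, β+1+n)`, and the recurrence `B(a, b+1) = b/(a+b) B(a, b)` expresses the three values
through `B(α, β+2) = Γ(α)Γ(β+2)/Γ(α+β+2)`.
-/

open MeasureTheory intervalIntegral ProbabilityTheory Set

section BetaIntegral

variable {a b : ℝ}

lemma ofReal_rpow_mul_one_sub_rpow {x : ℝ} (hx : x ∈ Icc (0 : ℝ) 1) :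
    ((x ^ (a - 1) * (1 - x) ^ (b - 1) : ℝ) : ℂ) =
      (x : ℂ) ^ ((a : ℂ) - 1) * (1 - (x : ℂ)) ^ ((b : ℂ) - 1) := by
  rw [Complex.ofReal_mul, Complex.ofReal_cpow hx.1, Complex.ofReal_cpow (sub_nonneg.2 hx.2)]
  push_cast
  rfl

lemma intervalIntegrable_rpow_mul_one_sub_rpow (ha : 0 < a) (hb : 0 < b) :
    IntervalIntegrable (fun x : ℝ ↦ x ^ (a - 1) * (1 - x) ^ (b - 1)) volume 0 1 := by
  have hC : IntervalIntegrable (fun x : ℝ ↦ ((x ^ (a - 1) * (1 - x) ^ (b - 1) : ℝ) : ℂ))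
      volume 0 1 :=
    (Complex.betaIntegral_convergent (u := a) (v := b) (by simpa) (by simpa)).congr
      fun x hx ↦ (ofReal_rpow_mul_one_sub_rpow (by simpa using uIoc_subset_uIcc hx)).symm
  rw [intervalIntegrable_iff_integrableOn_Ioc_of_le zero_le_one] at hC ⊢
  simpa [IntegrableOn] using hC.re

lemma integral_rpow_mul_one_sub_rpow (ha : 0 < a) (hb : 0 < b) :
    ∫ x in (0 : ℝ)..1, x ^ (a - 1) * (1 - x) ^ (b - 1) = beta a b := by
  rw [beta_eq_betaIntegralReal a b ha hb, Complex.betaIntegral,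
    integral_congr fun x hx ↦ (ofReal_rpow_mul_one_sub_rpow (by simpa using hx)).symm,
    integral_ofReal, Complex.ofReal_re]

lemma integral_rpow_mul_one_sub_rpow_mul_sum (ha : 0 < a) (hb : 0 < b) (s : Finset ℕ)
    (c : ℕ → ℝ) :
    ∫ x in (0 : ℝ)..1, x ^ (a - 1) * (1 - x) ^ (b - 1) * ∑ n ∈ s, (1 - x) ^ n * c n =
      ∑ n ∈ s, beta a (b + n) * c n := by
  have hterm (n : ℕ) :
      EqOn (fun x : ℝ ↦ x ^ (a - 1) * (1 - x) ^ (b - 1) * ((1 - x) ^ n * c n))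
        (fun x ↦ x ^ (a - 1) * (1 - x) ^ (b + n - 1) * c n) (Ioo 0 1) := by
    intro x hx
    dsimp only
    rw [show b + n - 1 = (b - 1) + n by ring, Real.rpow_add (sub_pos.2 hx.2),
      Real.rpow_natCast]
    ring
  have hint (n : ℕ) : IntervalIntegrable
      (fun x : ℝ ↦ x ^ (a - 1) * (1 - x) ^ (b - 1) * ((1 - x) ^ n * c n)) volume 0 1 :=
    (intervalIntegrable_rpow_mul_one_sub_rpow ha hb).mul_continuousOn (by fun_prop)
  simp_rw [Finset.mul_sum]
  rw [integral_finsetSum fun n _ ↦ hint n]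
  refine Finset.sum_congr rfl fun n _ ↦ ?_
  rw [integral_congr_Ioo_of_le zero_le_one (hterm n), intervalIntegral.integral_mul_const,
    integral_rpow_mul_one_sub_rpow ha (by positivity)]

lemma beta_add_one_right (ha : 0 < a) (hb : 0 < b) :
    beta a (b + 1) = b / (a + b) * beta a b := by
  rw [beta, beta, ← add_assoc, Real.Gamma_add_one hb.ne', Real.Gamma_add_one (by positivity)]
  field_simp

end BetaIntegral

/-- The coefficients of the matrix polynomial `x ↦ Vᵀ Z(x) V` in powers of `1 - x`. -/
noncomputable def kernelCoeff (α β k : ℝ) : ℕ → Matrix (Fin 2) (Fin 2) ℝ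
  | 0 => !![β + 1, β + 1; β + 1, β + 1]
  | 1 => !![-k, -(α + β + 2); -(α + β + 2), -(2 * α + 2 * β - k + 4)]
  | 2 => !![0, 0; 0, (α + β - k + 2) ^ 2 / (β - k + 1)]
  | _ => 0

lemma transpose_Vmat_mul_Zmat_mul_Vmat {α β k : ℝ} (hd : β - k + 1 ≠ 0) (x : ℝ) :
    (Vmat α β k)ᵀ * Zmat β k x * Vmat α β k =
      ∑ n ∈ Finset.range 3, (1 - x) ^ n • kernelCoeff α β k n := by
  ext i j
  fin_cases i <;> fin_cases j <;>
    simp [Finset.sum_range_succ, kernelCoeff, Vmat, Zmat, Matrix.mul_apply, Fin.sum_univ_two] <;>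
    field_simp <;> ring

lemma inv_smul_Wmat {α β k x : ℝ} (hx : 0 < x) :
    x⁻¹ • Wmat α β k x =
      (x ^ (α - 1) * (1 - x) ^ β) • ((Vmat α β k)ᵀ * Zmat β k x * Vmat α β k) := by
  rw [Wmat, smul_smul, Real.rpow_sub_one hx.ne']
  ring_nf

lemma muM1_eq_sum {α β k : ℝ} (hα : 0 < α) (hβ : -1 < β) (hd : β - k + 1 ≠ 0) :
    muM1 α β k = ∑ n ∈ Finset.range 3, beta α (β + 1 + n) • kernelCoeff α β k n := by
  have hb : 0 < β + 1 := by linarith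
  have hab₁ : α + β + 1 ≠ 0 := by linarith
  have hab₂ : α + β + 2 ≠ 0 := by linarith
  have h2 : beta α (β + 1 + 1) = (β + 1) / (α + β + 1) * beta α (β + 1) := by
    rw [beta_add_one_right hα hb, add_assoc]
  have h3 : beta α (β + 1 + 2) = (β + 2) / (α + β + 2) * beta α (β + 1 + 1) := by
    rw [show β + 1 + 2 = β + 1 + 1 + 1 by ring, beta_add_one_right hα (by linarith)]
    ring_nf
  have hmu : muM1 α β k = beta α (β + 1 + 1) • !![α + β - k + 1, -1;
       -1, ((α + 1) * (k + 1) * (α + β - k + 2) - k * (β - k + 1)) /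
         ((α + β + 2) * (β - k + 1))] := by
    rw [muM1, beta]; ring_nf
  simp only [Finset.sum_range_succ, Finset.sum_range_zero, Nat.cast_zero, add_zero, zero_add,
    Nat.cast_one, Nat.cast_ofNat, hmu, h3, h2]
  ext i j
  fin_cases i <;> fin_cases j <;> simp [kernelCoeff] <;> field_simp <;> ring

theorem stmt_13_general (α β k : ℝ) (hα : 0 < α) (hβ : β > -1)
    (hkβ : k < β + 1) :
    ∀ i j : Fin 2,
      ∫ x in (0 : ℝ)..1, (x⁻¹ • Wmat α β k x) i j = muM1 α β k i j := by
  intro i j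
  have hd : β - k + 1 ≠ 0 := by linarith
  have hentry : EqOn (fun x ↦ (x⁻¹ • Wmat α β k x) i j)
      (fun x ↦ x ^ (α - 1) * (1 - x) ^ (β + 1 - 1) *
        ∑ n ∈ Finset.range 3, (1 - x) ^ n * kernelCoeff α β k n i j) (Ioo 0 1) := by
    intro x hx
    dsimp only
    rw [inv_smul_Wmat hx.1, transpose_Vmat_mul_Zmat_mul_Vmat hd]
    simp only [Matrix.smul_apply, Matrix.sum_apply, smul_eq_mul, add_sub_cancel_right]
  rw [integral_congr_Ioo_of_le zero_le_one hentry,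
    integral_rpow_mul_one_sub_rpow_mul_sum hα (by linarith), muM1_eq_sum hα hβ hd]
  simp [Matrix.sum_apply]

/-- The `(-1)`-st moment of the weight `W`: `∫₀¹ x⁻¹ W(x) dx = μ₋₁`,
entrywise. -/
theorem stmt_13 (α β k : ℝ) (hα : 0 < α) (hβ : β > -1)
    (hk : 0 < k) (hkβ : k < β + 1) :
    ∀ i j : Fin 2,
      ∫ x in (0 : ℝ)..1, (x⁻¹ • Wmat α β k x) i j = muM1 α β k i j :=
  stmt_13_general α β k hα hβ hkβ
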